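/- arXiv:1404.0666 — 2 statements merged into one kernel-verified Lean document; each statement's English description precedes it below -/
import Mathlib

section
/- There exists a diagonal approximation Δ: P → P ⊗ P whose components satisfy: Δ_0(x) = x ⊗ x; Δ_1(y_i) = y_i ⊗ a_i x + x ⊗ y_i and Δ_1(z_i) = z_i ⊗ b_i x + x ⊗ z_i for all 1 ≤ i ≤ n; Δ_{02}(w) = x ⊗ w; and Δ_{11}(w) = Σ_{i=1}^n Σ_{j=1}^{i-1} (α_j y_j + β_j z_j) ⊗ q_{i-1}(y_i + a_i z_i) + Σ_{i=1}^n q_{i-1} y_i ⊗ q_{i-1} a_i z_i − Σ_{i=1}^{n-1} Σ_{j=1}^{i-1} (α_j y_j + β_j z_j) ⊗ q_{i-1} a_i b_i a_i^{-1} y_i − Σ_{i=1}^{n-1} (α_i y_i + q_{i-1} a_i z_i) ⊗ q_{i-1} a_i b_i a_i^{-1} y_i − Σ_{i=1}^{n-1} Σ_{j=1}^{i} (α_j y_j + β_j z_j) ⊗ q_i z_i − z_n ⊗ b_n y_n. -/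
open scoped TensorProduct
open scoped commutatorElement

namespace SurfaceOr

/-- Generators: `Sum.inl i` is `aᵢ`, `Sum.inr i` is `bᵢ`. -/
abbrev Gen (n : ℕ) := Fin n ⊕ Fin n

/-- The single relator `[a₁,b₁][a₂,b₂]⋯[aₙ,bₙ]` of the orientable surface group. -/
def rel (n : ℕ) : FreeGroup (Gen n) :=
  (List.ofFn fun i : Fin n =>
    ⁅(FreeGroup.of (Sum.inl i) : FreeGroup (Gen n)), FreeGroup.of (Sum.inr i)⁆).prod

/-- The orientable surface group of genus `n`. -/
abbrev SurfaceGroup (n : ℕ) := PresentedGroup ({rel n} : Set (FreeGroup (Gen n)))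

noncomputable def a {n : ℕ} (i : Fin n) : SurfaceGroup n := PresentedGroup.of (Sum.inl i)
noncomputable def b {n : ℕ} (i : Fin n) : SurfaceGroup n := PresentedGroup.of (Sum.inr i)

/-- `q k = p₁ p₂ ⋯ p_k` where `pᵢ = [aᵢ,bᵢ]`. -/
noncomputable def q {n : ℕ} (k : ℕ) : SurfaceGroup n :=
  ((List.ofFn fun i : Fin n => ⁅a i, b i⁆).take k).prod

/-- The integral group ring `ℤG`. -/
abbrev A (n : ℕ) := MonoidAlgebra ℤ (SurfaceGroup n)

/-- Inclusion of the group in its group ring. -/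
noncomputable def j {n : ℕ} : SurfaceGroup n →* A n := MonoidAlgebra.of ℤ (SurfaceGroup n)

/-- The Fox derivative `∂p/∂aᵢ = q_{i-1}(1 - aᵢbᵢaᵢ⁻¹)`. -/
noncomputable def Fa {n : ℕ} (i : Fin n) : A n :=
  j (q (n := n) i.val) * (1 - j (a i * b i * (a i)⁻¹))

/-- The Fox derivative `∂p/∂bᵢ = q_{i-1}aᵢ(1 - bᵢaᵢ⁻¹bᵢ⁻¹)`. -/
noncomputable def Fb {n : ℕ} (i : Fin n) : A n :=
  j (q (n := n) i.val * a i) * (1 - j (b i * (a i)⁻¹ * (b i)⁻¹))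

abbrev P0 (n : ℕ) := A n
abbrev P1 (n : ℕ) := Gen n → A n
abbrev P2 (n : ℕ) := A n

/-- Coefficients of `d₁`. -/
noncomputable def c {n : ℕ} : Gen n → A n
  | .inl i => j (a i) - 1
  | .inr i => j (b i) - 1

/-- Coefficients of `d₂` (the Fox derivatives of the relator). -/
noncomputable def fox {n : ℕ} : Gen n → A n
  | .inl i => Fa i
  | .inr i => Fb i

/-- `d₁ : P₁ → P₀`, `yᵢ ↦ (aᵢ-1)x`, `zᵢ ↦ (bᵢ-1)x`. -/
noncomputable def d1 {n : ℕ} : P1 n →ₗ[A n] P0 n where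
  toFun f := ∑ s, f s * c s
  map_add' f g := by simp [add_mul, Finset.sum_add_distrib]
  map_smul' r f := by simp [Finset.mul_sum, mul_assoc, smul_eq_mul, mul_add]

/-- `d₂ : P₂ → P₁`, `w ↦ Σᵢ (∂p/∂aᵢ)yᵢ + (∂p/∂bᵢ)zᵢ`. -/
noncomputable def d2 {n : ℕ} : P2 n →ₗ[A n] P1 n where
  toFun r := fun s => r * fox s
  map_add' r r' := by funext s; simp [add_mul]
  map_smul' r r' := by funext s; simp [mul_assoc, smul_eq_mul]

/-- The augmentation `ε : ℤG → ℤ`. -/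
noncomputable def aug {n : ℕ} : A n →ₐ[ℤ] ℤ := MonoidAlgebra.lift ℤ ℤ (SurfaceGroup n) 1

/-- `ε` as a `ℤ`-linear map. -/
noncomputable def augz {n : ℕ} : P0 n →ₗ[ℤ] ℤ := (aug (n := n)).toLinearMap

/-- `d₁` as a `ℤ`-linear map. -/
noncomputable def d1z {n : ℕ} : P1 n →ₗ[ℤ] P0 n := (d1 (n := n)).toAddMonoidHom.toIntLinearMap

/-- `d₂` as a `ℤ`-linear map. -/
noncomputable def d2z {n : ℕ} : P2 n →ₗ[ℤ] P1 n := (d2 (n := n)).toAddMonoidHom.toIntLinearMap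

/-- The action of `g ∈ G` on `P₀ = ℤG` (left multiplication), as a `ℤ`-linear map. -/
noncomputable def L0 {n : ℕ} (g : SurfaceGroup n) : P0 n →ₗ[ℤ] P0 n :=
  LinearMap.mulLeft ℤ (j g)

/-- The action of `g ∈ G` on `P₁ = (ℤG)²ⁿ`, as a `ℤ`-linear map. -/
noncomputable def L1 {n : ℕ} (g : SurfaceGroup n) : P1 n →ₗ[ℤ] P1 n :=
  LinearMap.pi fun s => (L0 g).comp (LinearMap.proj s)

/-- `(ε ⊗ ε) : P₀ ⊗ P₀ → ℤ ⊗ ℤ ≅ ℤ`. -/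
noncomputable def augaug {n : ℕ} : P0 n ⊗[ℤ] P0 n →ₗ[ℤ] ℤ :=
  (TensorProduct.lid ℤ ℤ).toLinearMap ∘ₗ TensorProduct.map augz augz

/-- The generator `yᵢ` of `P₁`. -/
noncomputable def Y {n : ℕ} (i : Fin n) : P1 n := Pi.single (Sum.inl i) 1

/-- The generator `zᵢ` of `P₁`. -/
noncomputable def Z {n : ℕ} (i : Fin n) : P1 n := Pi.single (Sum.inr i) 1
/-- The column of Fox derivatives `(∂p/∂aⱼ)yⱼ + (∂p/∂bⱼ)zⱼ`. -/
noncomputable def FoxCol {n : ℕ} (i : Fin n) : P1 n := Fa i • Y i + Fb i • Z i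

/-- The element `Δ₁₁(w) ∈ P₁ ⊗ P₁` of Theorem 2.2. -/
noncomputable def Delta11 (n : ℕ) (hn : 1 ≤ n) : P1 n ⊗[ℤ] P1 n :=
  (∑ i : Fin n, ∑ k ∈ Finset.Iio i,
      FoxCol k ⊗ₜ[ℤ] (j (q (n := n) i.val) • Y i + j (q (n := n) i.val * a i) • Z i))
  + (∑ i : Fin n, (j (q (n := n) i.val) • Y i) ⊗ₜ[ℤ] (j (q (n := n) i.val * a i) • Z i))
  - (∑ i ∈ Finset.univ.filter (fun i : Fin n => (i : ℕ) + 1 < n), ∑ k ∈ Finset.Iio i,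
      FoxCol k ⊗ₜ[ℤ] (j (q (n := n) i.val * (a i * b i * (a i)⁻¹)) • Y i))
  - (∑ i ∈ Finset.univ.filter (fun i : Fin n => (i : ℕ) + 1 < n),
      (Fa i • Y i + j (q (n := n) i.val * a i) • Z i) ⊗ₜ[ℤ] (j (q (n := n) i.val * (a i * b i * (a i)⁻¹)) • Y i))
  - (∑ i ∈ Finset.univ.filter (fun i : Fin n => (i : ℕ) + 1 < n), ∑ k ∈ Finset.Iic i,
      FoxCol k ⊗ₜ[ℤ] (j (q (n := n) (i.val + 1)) • Z i))
  - Z (⟨n - 1, by omega⟩ : Fin n) ⊗ₜ[ℤ]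
      (j (b (⟨n - 1, by omega⟩ : Fin n)) • Y (⟨n - 1, by omega⟩ : Fin n))

/-!
A `ℤG`-linear map out of a free `ℤG`-module into a module with a `G`-action is the same as an
equivariant additive map, and is determined by the images of a basis (`orbitMap`,
`ext_of_equivariant`). So `Δ` is defined by its values on `x`, `yᵢ`, `zᵢ`, `w`, and each identity
of the chain-map condition, being an identity between equivariant maps, only has to be checked on
these generators. In degree 1 this is `(g - 1) ⊗ g + 1 ⊗ (g - 1) = g ⊗ g - 1 ⊗ 1`.

In degree 2, let `Sᵢ = Σ_{k<i} (αₖyₖ + βₖzₖ)`. The Fox column `αₖyₖ + βₖzₖ` has boundary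
`qₖ - q_{k-1}`, so `d₁Sᵢ = q_{i-1} - 1`. Regrouped along these partial sums, `Δ₁₁(w)` becomes
`Σᵢ Tᵢ + d₂w ⊗ (bₙyₙ + zₙ)`, and `(d₁ ⊗ 1)Tᵢ`, `(1 ⊗ d₁)Tᵢ` are computed by expanding everything in
the vertices `q_{i-1}, q_{i-1}aᵢ, q_{i-1}aᵢbᵢ, q_{i-1}aᵢbᵢaᵢ⁻¹, qᵢ` of the relator path. What is left
over telescopes, because `qₙ = 1`.
-/

section EquivariantMaps

variable {k G V ι : Type*} [CommSemiring k] [Monoid G] [AddCommMonoid V] [Module k V]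

/-- The `k[G]`-linear map `r ↦ r • v` for the `k[G]`-module structure given by `ρ`. -/
noncomputable def orbitMap (ρ : Representation k G V) (v : V) : MonoidAlgebra k G →ₗ[k] V :=
  ρ.asAlgebraHom.toLinearMap.flip v

lemma orbitMap_of (ρ : Representation k G V) (v : V) (g : G) :
    orbitMap ρ v (MonoidAlgebra.of k G g) = ρ g v := by
  simp [orbitMap]

lemma orbitMap_one (ρ : Representation k G V) (v : V) : orbitMap ρ v 1 = v := by
  simp [orbitMap]

lemma orbitMap_of_mul (ρ : Representation k G V) (v : V) (g : G) (r : MonoidAlgebra k G) :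
    orbitMap ρ v (MonoidAlgebra.of k G g * r) = ρ g (orbitMap ρ v r) := by
  simp [orbitMap]

lemma eq_orbitMap {ρ : Representation k G V} {φ : MonoidAlgebra k G →ₗ[k] V}
    (hφ : ∀ g r, φ (MonoidAlgebra.of k G g * r) = ρ g (φ r)) : φ = orbitMap ρ (φ 1) := by
  ext g
  have := hφ g 1
  rw [mul_one] at this
  simp only [LinearMap.comp_apply, MonoidAlgebra.lsingle_apply, ← MonoidAlgebra.of_apply, this,
    orbitMap_of]

lemma ext_of_equivariant {ρ : Representation k G V} {φ ψ : MonoidAlgebra k G →ₗ[k] V}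
    (hφ : ∀ g r, φ (MonoidAlgebra.of k G g * r) = ρ g (φ r))
    (hψ : ∀ g r, ψ (MonoidAlgebra.of k G g * r) = ρ g (ψ r)) (h : φ 1 = ψ 1) : φ = ψ := by
  rw [eq_orbitMap hφ, eq_orbitMap hψ, h]

variable [Fintype ι]

noncomputable def orbitMapPi (ρ : Representation k G V) (v : ι → V) :
    (ι → MonoidAlgebra k G) →ₗ[k] V :=
  ∑ s, orbitMap ρ (v s) ∘ₗ LinearMap.proj s

lemma orbitMapPi_apply (ρ : Representation k G V) (v : ι → V) (f : ι → MonoidAlgebra k G) :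
    orbitMapPi ρ v f = ∑ s, orbitMap ρ (v s) (f s) := by
  simp [orbitMapPi]

lemma orbitMapPi_single [DecidableEq ι] (ρ : Representation k G V) (v : ι → V) (s : ι) :
    orbitMapPi ρ v (Pi.single s 1) = v s := by
  rw [orbitMapPi_apply, Finset.sum_eq_single s (fun t _ ht => by simp [ht]) (by simp)]
  simp [orbitMap_one]

lemma orbitMapPi_of_smul (ρ : Representation k G V) (v : ι → V) (g : G)
    (f : ι → MonoidAlgebra k G) :
    orbitMapPi ρ v (MonoidAlgebra.of k G g • f) = ρ g (orbitMapPi ρ v f) := by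
  simp only [orbitMapPi_apply, map_sum, Pi.smul_apply, smul_eq_mul, orbitMap_of_mul]

lemma ext_of_equivariant_pi [DecidableEq ι] {ρ : Representation k G V}
    {φ ψ : (ι → MonoidAlgebra k G) →ₗ[k] V}
    (hφ : ∀ g f, φ (MonoidAlgebra.of k G g • f) = ρ g (φ f))
    (hψ : ∀ g f, ψ (MonoidAlgebra.of k G g • f) = ρ g (ψ f))
    (h : ∀ s, φ (Pi.single s 1) = ψ (Pi.single s 1)) : φ = ψ := by
  refine LinearMap.pi_ext' fun s => ext_of_equivariant (ρ := ρ) (fun g r => ?_) (fun g r => ?_)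
    (by simpa using h s)
  · simpa [← Pi.single_smul] using hφ g (Pi.single s r)
  · simpa [← Pi.single_smul] using hψ g (Pi.single s r)

end EquivariantMaps

section SurfaceGroup

variable {n : ℕ}

lemma q_zero : q (n := n) 0 = 1 := by simp [q]

lemma q_succ (i : Fin n) : q (n := n) (i.val + 1) = q i.val * ⁅a i, b i⁆ := by
  rw [q, q, List.prod_take_succ _ _ (by simp)]
  simp

lemma q_rel : q (n := n) n = 1 := by
  have hrel := map_list_prod (PresentedGroup.mk ({rel n} : Set (FreeGroup (Gen n))))
    (List.ofFn fun i : Fin n =>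
      ⁅(FreeGroup.of (Sum.inl i) : FreeGroup (Gen n)), FreeGroup.of (Sum.inr i)⁆)
  rw [List.map_ofFn] at hrel
  rw [q, List.take_of_length_le (by simp)]
  exact hrel.symm.trans (PresentedGroup.one_of_mem rfl)

noncomputable def qa (i : Fin n) : SurfaceGroup n := q i.val * a i
noncomputable def qab (i : Fin n) : SurfaceGroup n := qa i * b i
noncomputable def qaba (i : Fin n) : SurfaceGroup n := q i.val * (a i * b i * (a i)⁻¹)

lemma q_mul_a (i : Fin n) : q i.val * a i = qa i := rfl
lemma qa_mul_b (i : Fin n) : qa i * b i = qab i := rfl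
lemma q_mul_aba (i : Fin n) : q (n := n) i.val * (a i * b i * (a i)⁻¹) = qaba i := rfl

lemma qaba_mul_a (i : Fin n) : qaba i * a i = qab i := by
  simp only [qaba, qab, qa]; group

lemma q_succ_mul_b (i : Fin n) : q (n := n) (i.val + 1) * b i = qaba i := by
  rw [q_succ, qaba, commutatorElement_def]; group

lemma Fa_eq (i : Fin n) : Fa i = j (q i.val) - j (qaba i) := by
  rw [Fa, mul_sub, mul_one, ← map_mul, qaba]

lemma Fb_eq (i : Fin n) : Fb i = j (qa i) - j (q (n := n) (i.val + 1)) := by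
  rw [Fb, mul_sub, mul_one, ← map_mul, qa, q_succ, commutatorElement_def]
  congr 2
  group

def last (n : ℕ) (hn : 1 ≤ n) : Fin n := ⟨n - 1, by omega⟩

lemma q_last_succ (hn : 1 ≤ n) : q (n := n) ((last n hn).val + 1) = 1 := by
  rw [show (last n hn).val + 1 = n by simp [last]; omega, q_rel]

lemma qaba_last (hn : 1 ≤ n) : qaba (last n hn) = b (last n hn) := by
  rw [← q_succ_mul_b, q_last_succ, one_mul]

lemma c_eq (s : Gen n) : c s = j (PresentedGroup.of s) - 1 := by
  cases s <;> rfl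

lemma d1_single (s : Gen n) (r : A n) : d1 (Pi.single s r : P1 n) = r * c s := by
  simp only [d1, LinearMap.coe_mk, AddHom.coe_mk, Pi.single_apply, ite_mul, zero_mul,
    Finset.sum_ite_eq', Finset.mem_univ, if_true]

lemma d1_smul_Y (i : Fin n) (r : A n) : d1 (r • Y i) = r * j (a i) - r := by
  rw [Y, ← Pi.single_smul, smul_eq_mul, mul_one, d1_single, c, mul_sub, mul_one]

lemma d1_smul_Z (i : Fin n) (r : A n) : d1 (r • Z i) = r * j (b i) - r := by
  rw [Z, ← Pi.single_smul, smul_eq_mul, mul_one, d1_single, c, mul_sub, mul_one]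

lemma d1_Z (i : Fin n) : d1 (Z i) = j (b i) - 1 := by
  simpa using d1_smul_Z i 1

lemma d1_FoxCol (i : Fin n) : d1 (FoxCol i) = j (q (n := n) (i.val + 1)) - j (q i.val) := by
  rw [FoxCol, map_add, d1_smul_Y, d1_smul_Z, Fa_eq, Fb_eq]
  simp only [sub_mul, ← map_mul, qaba_mul_a, q_succ_mul_b, q_mul_a, qa_mul_b]
  abel

lemma d2_one : d2 (1 : A n) = ∑ i, FoxCol i := by
  ext s
  cases s <;> simp [d2, fox, FoxCol, Y, Z, Finset.sum_apply, Pi.single_apply]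

noncomputable def partialFox (k : ℕ) : P1 n :=
  ∑ i ∈ Finset.univ.filter (fun i : Fin n => (i : ℕ) < k), FoxCol i

lemma partialFox_zero : partialFox (n := n) 0 = 0 := by simp [partialFox]

lemma partialFox_succ (i : Fin n) :
    partialFox (n := n) (i.val + 1) = partialFox i.val + FoxCol i := by
  have : (Finset.univ.filter fun k : Fin n => (k : ℕ) < i.val + 1)
      = insert i (Finset.univ.filter fun k : Fin n => (k : ℕ) < i.val) := by
    ext k
    simp only [Finset.mem_filter, Finset.mem_univ, true_and, Finset.mem_insert, Fin.ext_iff]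
    omega
  rw [partialFox, partialFox, this, Finset.sum_insert (by simp), add_comm]

lemma partialFox_self : partialFox (n := n) n = d2 1 := by
  simp [partialFox, d2_one]

lemma sum_Iio_FoxCol (i : Fin n) : ∑ k ∈ Finset.Iio i, FoxCol k = partialFox i.val := by
  rw [partialFox]; congr 1; ext k; simp

lemma sum_Iic_FoxCol (i : Fin n) : ∑ k ∈ Finset.Iic i, FoxCol k = partialFox (i.val + 1) := by
  rw [partialFox]; congr 1; ext k; simp

lemma d1_partialFox {k : ℕ} (hk : k ≤ n) : d1 (partialFox (n := n) k) = j (q k) - 1 := by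
  induction k with
  | zero => rw [partialFox_zero, map_zero, q_zero, map_one, sub_self]
  | succ k ih =>
    rw [show k + 1 = (⟨k, hk⟩ : Fin n).val + 1 from rfl, partialFox_succ, map_add,
      ih (by omega), d1_FoxCol]
    abel

lemma d1_d2_one : d1 (d2 (1 : A n)) = 0 := by
  rw [← partialFox_self, d1_partialFox le_rfl, q_rel, map_one, sub_self]

lemma sum_filter_succ_lt (hn : 1 ≤ n) {M : Type*} [AddCommGroup M] (f : Fin n → M) :
    ∑ i ∈ Finset.univ.filter (fun i : Fin n => (i : ℕ) + 1 < n), f i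
      = ∑ i, f i - f (last n hn) := by
  have hlast : Finset.univ.filter (fun i : Fin n => ¬ ((i : ℕ) + 1 < n)) = {last n hn} := by
    ext i
    simp only [Finset.mem_filter, Finset.mem_univ, true_and, Finset.mem_singleton, Fin.ext_iff,
      last]
    omega
  rw [← Finset.sum_filter_add_sum_filter_not Finset.univ (fun i : Fin n => (i : ℕ) + 1 < n),
    hlast, Finset.sum_singleton, add_sub_cancel_right]

lemma partialFox_last_succ (hn : 1 ≤ n) :
    partialFox (n := n) ((last n hn).val + 1) = d2 1 := by
  rw [show (last n hn).val + 1 = n by simp [last]; omega, partialFox_self]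

noncomputable def summand11 (i : Fin n) : P1 n ⊗[ℤ] P1 n :=
  partialFox i.val ⊗ₜ[ℤ] FoxCol i + (j (q (n := n) i.val) • Y i) ⊗ₜ[ℤ] (j (qa i) • Z i)
    - (Fa i • Y i + j (qa i) • Z i) ⊗ₜ[ℤ] (j (qaba i) • Y i)
    - FoxCol i ⊗ₜ[ℤ] (j (q (n := n) (i.val + 1)) • Z i)

/- Extending the sums of `Δ₁₁(w)` that stop at `i = n - 1` to all `i`, the added terms and
`-zₙ ⊗ bₙyₙ` assemble into `d₂w ⊗ (bₙyₙ + zₙ)`, which `d₁ ⊗ 1` kills. -/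
lemma Delta11_eq (hn : 1 ≤ n) :
    Delta11 n hn = ∑ i, summand11 i
      + d2 1 ⊗ₜ[ℤ] (j (b (last n hn)) • Y (last n hn) + Z (last n hn)) := by
  set l := last n hn
  have hsum : ∀ i : Fin n,
      partialFox i.val ⊗ₜ[ℤ] (j (q (n := n) i.val) • Y i + j (qa i) • Z i)
        + (j (q (n := n) i.val) • Y i) ⊗ₜ[ℤ] (j (qa i) • Z i)
        - partialFox i.val ⊗ₜ[ℤ] (j (qaba i) • Y i)
        - (Fa i • Y i + j (qa i) • Z i) ⊗ₜ[ℤ] (j (qaba i) • Y i)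
        - partialFox (i.val + 1) ⊗ₜ[ℤ] (j (q (n := n) (i.val + 1)) • Z i) = summand11 i := by
    intro i
    simp only [summand11, partialFox_succ, FoxCol, Fa_eq, Fb_eq, sub_smul, TensorProduct.tmul_add,
      TensorProduct.tmul_sub, TensorProduct.add_tmul, TensorProduct.sub_tmul]
    abel
  have hlast : partialFox l.val ⊗ₜ[ℤ] (j (qaba l) • Y l)
      + (Fa l • Y l + j (qa l) • Z l) ⊗ₜ[ℤ] (j (qaba l) • Y l)
      + partialFox (l.val + 1) ⊗ₜ[ℤ] (j (q (n := n) (l.val + 1)) • Z l)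
      - Z l ⊗ₜ[ℤ] (j (b l) • Y l) = d2 1 ⊗ₜ[ℤ] (j (b l) • Y l + Z l) := by
    rw [← partialFox_last_succ hn, partialFox_succ, q_last_succ, map_one, one_smul, qaba_last,
      FoxCol, Fb_eq, q_last_succ, map_one]
    simp only [sub_smul, one_smul, TensorProduct.tmul_add, TensorProduct.add_tmul,
      TensorProduct.sub_tmul]
    abel
  rw [Delta11]
  simp only [← TensorProduct.sum_tmul, sum_Iio_FoxCol, sum_Iic_FoxCol, q_mul_a, q_mul_aba,
    sum_filter_succ_lt hn]
  rw [← hlast, ← Finset.sum_congr rfl fun i _ => hsum i]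
  simp only [Finset.sum_add_distrib, Finset.sum_sub_distrib]
  abel

lemma d1z_apply (f : P1 n) : d1z f = d1 f := rfl
lemma d2z_apply (r : P2 n) : d2z r = d2 r := rfl

lemma d1z_comp_L1 (g : SurfaceGroup n) : d1z ∘ₗ L1 g = L0 g ∘ₗ d1z :=
  LinearMap.ext (d1.map_smul (j g))

lemma d2z_comp_L0 (g : SurfaceGroup n) : d2z ∘ₗ L0 g = L1 g ∘ₗ d2z :=
  LinearMap.ext (d2.map_smul (j g))

/- Diagonal actions on `Pₚ ⊗ P_q`. Stating their types pins the instance `Module ℤ (Pₚ ⊗ P_q)`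
to the one instance search finds (and the statement uses), not the defeq but syntactically
different one built by `tprod`: rewriting fails across the two. -/
noncomputable def rep00 (n : ℕ) : Representation ℤ (SurfaceGroup n) (P0 n ⊗[ℤ] P0 n) :=
  (Representation.ofModule' (P0 n)).tprod (Representation.ofModule' (P0 n))
noncomputable def rep01 (n : ℕ) : Representation ℤ (SurfaceGroup n) (P0 n ⊗[ℤ] P1 n) :=
  (Representation.ofModule' (P0 n)).tprod (Representation.ofModule' (P1 n))
noncomputable def rep10 (n : ℕ) : Representation ℤ (SurfaceGroup n) (P1 n ⊗[ℤ] P0 n) :=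
  (Representation.ofModule' (P1 n)).tprod (Representation.ofModule' (P0 n))
noncomputable def rep11 (n : ℕ) : Representation ℤ (SurfaceGroup n) (P1 n ⊗[ℤ] P1 n) :=
  (Representation.ofModule' (P1 n)).tprod (Representation.ofModule' (P1 n))

lemma rep00_tmul (g : SurfaceGroup n) (x y : P0 n) :
    rep00 n g (x ⊗ₜ[ℤ] y) = (j g * x) ⊗ₜ[ℤ] (j g * y) := rfl
lemma rep01_tmul (g : SurfaceGroup n) (x : P0 n) (y : P1 n) :
    rep01 n g (x ⊗ₜ[ℤ] y) = (j g * x) ⊗ₜ[ℤ] (j g • y) := rfl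
lemma rep10_tmul (g : SurfaceGroup n) (x : P1 n) (y : P0 n) :
    rep10 n g (x ⊗ₜ[ℤ] y) = (j g • x) ⊗ₜ[ℤ] (j g * y) := rfl

lemma orbitMap_j {V : Type*} [AddCommMonoid V] [Module ℤ V]
    (ρ : Representation ℤ (SurfaceGroup n) V) (v : V) (g : SurfaceGroup n) :
    orbitMap ρ v (j g) = ρ g v :=
  orbitMap_of ρ v g

noncomputable def diag0 (n : ℕ) : P0 n →ₗ[ℤ] P0 n ⊗[ℤ] P0 n :=
  orbitMap (rep00 n) (1 ⊗ₜ[ℤ] 1)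

noncomputable def diag1 (n : ℕ) : P1 n →ₗ[ℤ] (P0 n ⊗[ℤ] P1 n) × (P1 n ⊗[ℤ] P0 n) :=
  (orbitMapPi (rep01 n) fun s => 1 ⊗ₜ[ℤ] Pi.single s 1).prod
    (orbitMapPi (rep10 n) fun s => Pi.single s 1 ⊗ₜ[ℤ] j (PresentedGroup.of s))

/- The statement leaves `Δ₂₀` free; the chain-map condition is met by `Δ₂₀(w) = w ⊗ bₙaₙx`. -/
noncomputable def diag2 (n : ℕ) (hn : 1 ≤ n) :
    P2 n →ₗ[ℤ] (P0 n ⊗[ℤ] P2 n) × (P1 n ⊗[ℤ] P1 n) × (P2 n ⊗[ℤ] P0 n) :=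
  (diag0 n).prod ((orbitMap (rep11 n) (Delta11 n hn)).prod
    (orbitMap (rep00 n) (1 ⊗ₜ[ℤ] j (b (last n hn) * a (last n hn)))))

lemma diag0_j_mul (g : SurfaceGroup n) (r : P0 n) :
    diag0 n (j g * r) = TensorProduct.map (L0 g) (L0 g) (diag0 n r) :=
  orbitMap_of_mul _ _ g r

lemma diag1_j_smul (g : SurfaceGroup n) (f : P1 n) :
    diag1 n (j g • f) = (TensorProduct.map (L0 g) (L1 g) (diag1 n f).1,
      TensorProduct.map (L1 g) (L0 g) (diag1 n f).2) :=
  Prod.ext (orbitMapPi_of_smul _ _ g f) (orbitMapPi_of_smul _ _ g f)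

lemma diag2_j_mul (hn : 1 ≤ n) (g : SurfaceGroup n) (r : P2 n) :
    diag2 n hn (j g * r) = (TensorProduct.map (L0 g) (L0 g) (diag2 n hn r).1,
      TensorProduct.map (L1 g) (L1 g) (diag2 n hn r).2.1,
      TensorProduct.map (L0 g) (L0 g) (diag2 n hn r).2.2) :=
  Prod.ext (orbitMap_of_mul _ _ g r) (Prod.ext (orbitMap_of_mul _ _ g r) (orbitMap_of_mul _ _ g r))

lemma diag0_j_sub_one (g : SurfaceGroup n) :
    diag0 n (j g - 1) = j g ⊗ₜ[ℤ] j g - 1 ⊗ₜ[ℤ] 1 := by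
  rw [map_sub, diag0, orbitMap_j, orbitMap_one, rep00_tmul, mul_one]

lemma diag1_single (s : Gen n) :
    diag1 n (Pi.single s 1)
      = ((1 : P0 n) ⊗ₜ[ℤ] Pi.single s 1, Pi.single s 1 ⊗ₜ[ℤ] j (PresentedGroup.of s)) :=
  Prod.ext (orbitMapPi_single _ _ s) (orbitMapPi_single _ _ s)

lemma diag2_one (hn : 1 ≤ n) :
    diag2 n hn 1 = ((1 : P0 n) ⊗ₜ[ℤ] (1 : P2 n), Delta11 n hn,
      (1 : P2 n) ⊗ₜ[ℤ] j (b (last n hn) * a (last n hn))) :=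
  Prod.ext (orbitMap_one _ _) (Prod.ext (orbitMap_one _ _) (orbitMap_one _ _))

lemma augaug_diag0 (r : P0 n) : augaug (diag0 n r) = aug r := by
  have : augaug ∘ₗ diag0 n = augz := by
    ext g
    show augaug (diag0 n (j g)) = aug (j g)
    rw [diag0, orbitMap_j, rep00_tmul, mul_one]
    show TensorProduct.lid ℤ ℤ (TensorProduct.map augz augz (j g ⊗ₜ[ℤ] j g)) = aug (j g)
    simp [augz, aug, j]
  exact LinearMap.congr_fun this r

lemma diag_chain_one_lhs_j_smul (g : SurfaceGroup n) (f : P1 n) :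
    TensorProduct.map LinearMap.id d1z (diag1 n (j g • f)).1
      + TensorProduct.map d1z LinearMap.id (diag1 n (j g • f)).2
      = TensorProduct.map (L0 g) (L0 g) (TensorProduct.map LinearMap.id d1z (diag1 n f).1
        + TensorProduct.map d1z LinearMap.id (diag1 n f).2) := by
  simp only [diag1_j_smul, map_add, TensorProduct.map_map, d1z_comp_L1, LinearMap.id_comp,
    LinearMap.comp_id]

lemma diag_chain_one_single (s : Gen n) :
    TensorProduct.map LinearMap.id d1z (diag1 n (Pi.single s 1)).1
      + TensorProduct.map d1z LinearMap.id (diag1 n (Pi.single s 1)).2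
      = diag0 n (d1 (Pi.single s 1)) := by
  rw [diag1_single]
  simp only [TensorProduct.map_tmul, LinearMap.id_apply, d1z_apply, d1_single, one_mul, c_eq,
    diag0_j_sub_one, TensorProduct.tmul_sub, TensorProduct.sub_tmul]
  abel

lemma diag_chain_one (f : P1 n) :
    TensorProduct.map LinearMap.id d1z (diag1 n f).1
      + TensorProduct.map d1z LinearMap.id (diag1 n f).2 = diag0 n (d1 f) := by
  have key : TensorProduct.map LinearMap.id d1z ∘ₗ LinearMap.fst ℤ _ _ ∘ₗ diag1 n
      + TensorProduct.map d1z LinearMap.id ∘ₗ LinearMap.snd ℤ _ _ ∘ₗ diag1 n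
      = diag0 n ∘ₗ d1z := by
    refine ext_of_equivariant_pi (ρ := rep00 n) diag_chain_one_lhs_j_smul
      (fun g f => ?_) diag_chain_one_single
    exact (congrArg (diag0 n) (LinearMap.congr_fun (d1z_comp_L1 g) f)).trans (diag0_j_mul g _)
  exact LinearMap.congr_fun key f

lemma diag1_d2_one_eq_sum : diag1 n (d2 1) =
    (∑ i, (orbitMap (rep01 n) (1 ⊗ₜ[ℤ] Y i) (Fa i) + orbitMap (rep01 n) (1 ⊗ₜ[ℤ] Z i) (Fb i)),
      ∑ i, (orbitMap (rep10 n) (Y i ⊗ₜ[ℤ] j (a i)) (Fa i)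
        + orbitMap (rep10 n) (Z i ⊗ₜ[ℤ] j (b i)) (Fb i))) := by
  simp only [diag1, LinearMap.prod_apply, Function.prod, orbitMapPi_apply, d2, LinearMap.coe_mk,
    AddHom.coe_mk, one_mul, Fintype.sum_sum_type, ← Finset.sum_add_distrib]
  rfl

lemma map_d1z_id_summand11 (i : Fin n) :
    TensorProduct.map d1z LinearMap.id (summand11 i) + (1 : P0 n) ⊗ₜ[ℤ] FoxCol i
      = orbitMap (rep01 n) (1 ⊗ₜ[ℤ] Y i) (Fa i) + orbitMap (rep01 n) (1 ⊗ₜ[ℤ] Z i) (Fb i) := by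
  simp only [summand11, map_add, map_sub, TensorProduct.map_tmul, LinearMap.id_apply, d1z_apply,
    d1_partialFox i.isLt.le, d1_FoxCol, d1_smul_Y, d1_smul_Z, Fa_eq, Fb_eq, orbitMap_j,
    rep01_tmul, mul_one, sub_mul, ← map_mul, q_mul_a, qa_mul_b, qaba_mul_a]
  simp only [FoxCol, Fa_eq, Fb_eq, sub_smul, TensorProduct.tmul_add, TensorProduct.tmul_sub,
    TensorProduct.add_tmul, TensorProduct.sub_tmul]
  abel

lemma map_id_d1z_summand11 (i : Fin n) :
    TensorProduct.map LinearMap.id d1z (summand11 i)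
      = partialFox (i.val + 1) ⊗ₜ[ℤ] j (q (n := n) (i.val + 1))
        - partialFox i.val ⊗ₜ[ℤ] j (q (n := n) i.val)
        - (orbitMap (rep10 n) (Y i ⊗ₜ[ℤ] j (a i)) (Fa i)
          + orbitMap (rep10 n) (Z i ⊗ₜ[ℤ] j (b i)) (Fb i)) := by
  simp only [summand11, partialFox_succ, map_add, map_sub, TensorProduct.map_tmul,
    LinearMap.id_apply, d1z_apply, d1_FoxCol, d1_smul_Y, d1_smul_Z, Fa_eq, Fb_eq, orbitMap_j,
    rep10_tmul, ← map_mul, q_mul_a, qa_mul_b, qaba_mul_a, q_succ_mul_b]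
  simp only [FoxCol, Fa_eq, Fb_eq, sub_smul, TensorProduct.tmul_sub, TensorProduct.add_tmul,
    TensorProduct.sub_tmul]
  abel

lemma diag1_d2_one_fst (hn : 1 ≤ n) :
    (diag1 n (d2 1)).1
      = (1 : P0 n) ⊗ₜ[ℤ] d2 1 + TensorProduct.map d1z LinearMap.id (Delta11 n hn) := by
  rw [diag1_d2_one_eq_sum, Delta11_eq, map_add, TensorProduct.map_tmul, d1z_apply, d1_d2_one,
    TensorProduct.zero_tmul, add_zero, map_sum, d2_one, TensorProduct.tmul_sum,
    ← Finset.sum_add_distrib]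
  dsimp only
  exact Finset.sum_congr rfl fun i _ => (map_d1z_id_summand11 i).symm.trans (add_comm _ _)

lemma diag1_d2_one_snd (hn : 1 ≤ n) :
    (diag1 n (d2 1)).2 = d2 1 ⊗ₜ[ℤ] j (b (last n hn) * a (last n hn))
      - TensorProduct.map LinearMap.id d1z (Delta11 n hn) := by
  have htel : ∑ i : Fin n, (partialFox (n := n) (i.val + 1) ⊗ₜ[ℤ] j (q (n := n) (i.val + 1))
      - partialFox i.val ⊗ₜ[ℤ] j (q (n := n) i.val)) = d2 1 ⊗ₜ[ℤ] (1 : P0 n) := by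
    rw [Fin.sum_univ_eq_sum_range (fun k => partialFox (k + 1) ⊗ₜ[ℤ] j (q (n := n) (k + 1))
      - partialFox k ⊗ₜ[ℤ] j (q (n := n) k)),
      Finset.sum_range_sub (fun k => partialFox k ⊗ₜ[ℤ] j (q (n := n) k)), partialFox_self, q_rel,
      partialFox_zero, map_one (j (n := n)), TensorProduct.zero_tmul, sub_zero]
  rw [diag1_d2_one_eq_sum, Delta11_eq, map_add, TensorProduct.map_tmul, map_sum,
    LinearMap.id_apply, d1z_apply, map_add, d1_smul_Y, d1_Z, ← map_mul]
  simp only [map_id_d1z_summand11, Finset.sum_sub_distrib, htel, TensorProduct.tmul_sub,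
    TensorProduct.tmul_add]
  abel

lemma diag1_d2_j_mul (g : SurfaceGroup n) (r : P2 n) :
    diag1 n (d2 (j g * r)) = (TensorProduct.map (L0 g) (L1 g) (diag1 n (d2 r)).1,
      TensorProduct.map (L1 g) (L0 g) (diag1 n (d2 r)).2) := by
  rw [← smul_eq_mul, d2.map_smul, diag1_j_smul]

lemma diag_chain_two_fst_j_mul (hn : 1 ≤ n) (g : SurfaceGroup n) (r : P2 n) :
    TensorProduct.map LinearMap.id d2z (diag2 n hn (j g * r)).1
      + TensorProduct.map d1z LinearMap.id (diag2 n hn (j g * r)).2.1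
      = TensorProduct.map (L0 g) (L1 g) (TensorProduct.map LinearMap.id d2z (diag2 n hn r).1
        + TensorProduct.map d1z LinearMap.id (diag2 n hn r).2.1) := by
  simp only [diag2_j_mul, map_add, TensorProduct.map_map, d1z_comp_L1, d2z_comp_L0,
    LinearMap.id_comp, LinearMap.comp_id]

lemma diag_chain_two_snd_j_mul (hn : 1 ≤ n) (g : SurfaceGroup n) (r : P2 n) :
    TensorProduct.map d2z LinearMap.id (diag2 n hn (j g * r)).2.2
      - TensorProduct.map LinearMap.id d1z (diag2 n hn (j g * r)).2.1
      = TensorProduct.map (L1 g) (L0 g) (TensorProduct.map d2z LinearMap.id (diag2 n hn r).2.2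
        - TensorProduct.map LinearMap.id d1z (diag2 n hn r).2.1) := by
  simp only [diag2_j_mul, map_sub, TensorProduct.map_map, d1z_comp_L1, d2z_comp_L0,
    LinearMap.id_comp, LinearMap.comp_id]

lemma diag_chain_two (hn : 1 ≤ n) (r : P2 n) :
    (TensorProduct.map LinearMap.id d2z (diag2 n hn r).1
        + TensorProduct.map d1z LinearMap.id (diag2 n hn r).2.1,
      TensorProduct.map d2z LinearMap.id (diag2 n hn r).2.2
        - TensorProduct.map LinearMap.id d1z (diag2 n hn r).2.1) = diag1 n (d2 r) := by
  have hfst : TensorProduct.map LinearMap.id d2z ∘ₗ LinearMap.fst ℤ _ _ ∘ₗ diag2 n hn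
      + TensorProduct.map d1z LinearMap.id ∘ₗ LinearMap.fst ℤ _ _ ∘ₗ LinearMap.snd ℤ _ _
        ∘ₗ diag2 n hn
      = LinearMap.fst ℤ _ _ ∘ₗ diag1 n ∘ₗ d2z := by
    refine ext_of_equivariant (ρ := rep01 n) (diag_chain_two_fst_j_mul hn)
      (fun g r => congrArg Prod.fst (diag1_d2_j_mul g r)) ?_
    show TensorProduct.map LinearMap.id d2z (diag2 n hn 1).1
      + TensorProduct.map d1z LinearMap.id (diag2 n hn 1).2.1 = (diag1 n (d2 1)).1
    rw [diag2_one, TensorProduct.map_tmul, LinearMap.id_apply, d2z_apply, diag1_d2_one_fst hn]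
  have hsnd : TensorProduct.map d2z LinearMap.id ∘ₗ LinearMap.snd ℤ _ _ ∘ₗ LinearMap.snd ℤ _ _
        ∘ₗ diag2 n hn
      - TensorProduct.map LinearMap.id d1z ∘ₗ LinearMap.fst ℤ _ _ ∘ₗ LinearMap.snd ℤ _ _
        ∘ₗ diag2 n hn
      = LinearMap.snd ℤ _ _ ∘ₗ diag1 n ∘ₗ d2z := by
    refine ext_of_equivariant (ρ := rep10 n) (diag_chain_two_snd_j_mul hn)
      (fun g r => congrArg Prod.snd (diag1_d2_j_mul g r)) ?_
    show TensorProduct.map d2z LinearMap.id (diag2 n hn 1).2.2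
      - TensorProduct.map LinearMap.id d1z (diag2 n hn 1).2.1 = (diag1 n (d2 1)).2
    rw [diag2_one, TensorProduct.map_tmul, LinearMap.id_apply, d2z_apply, diag1_d2_one_snd hn]
  exact Prod.ext (LinearMap.congr_fun hfst r) (LinearMap.congr_fun hsnd r)

end SurfaceGroup

/-- there is a diagonal approximation `Δ : P → P ⊗ P` (a chain map of
complexes of `ℤG`-modules, where `P ⊗ P` carries the diagonal `G`-action, compatible with
the augmentations) whose components take the stated values on the generators `x`, `yᵢ`,
`zᵢ` and `w`.  `ℤG`-linearity into the diagonal action is expressed as `ℤ`-linearity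
together with `G`-equivariance. -/
theorem statement1 (n : ℕ) (hn : 1 ≤ n) :
    ∃ (Δ0 : P0 n →ₗ[ℤ] P0 n ⊗[ℤ] P0 n)
      (Δ1 : P1 n →ₗ[ℤ] (P0 n ⊗[ℤ] P1 n) × (P1 n ⊗[ℤ] P0 n))
      (Δ2 : P2 n →ₗ[ℤ] (P0 n ⊗[ℤ] P2 n) × (P1 n ⊗[ℤ] P1 n) × (P2 n ⊗[ℤ] P0 n)),
      -- `ℤG`-linearity (equivariance for the diagonal action on the target)
      (∀ (g : SurfaceGroup n) (r : P0 n),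
        Δ0 (j g * r) = TensorProduct.map (L0 g) (L0 g) (Δ0 r)) ∧
      (∀ (g : SurfaceGroup n) (f : P1 n),
        Δ1 (j g • f) = (TensorProduct.map (L0 g) (L1 g) (Δ1 f).1,
                        TensorProduct.map (L1 g) (L0 g) (Δ1 f).2)) ∧
      (∀ (g : SurfaceGroup n) (r : P2 n),
        Δ2 (j g * r) = (TensorProduct.map (L0 g) (L0 g) (Δ2 r).1,
                        TensorProduct.map (L1 g) (L1 g) (Δ2 r).2.1,
                        TensorProduct.map (L0 g) (L0 g) (Δ2 r).2.2)) ∧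
      -- compatibility with the augmentation: `(ε ⊗ ε) ∘ Δ₀ = ε`
      (∀ r : P0 n, augaug (Δ0 r) = aug r) ∧
      -- chain map condition in degree 1: `∂₁ ∘ Δ₁ = Δ₀ ∘ d₁`
      (∀ f : P1 n,
        TensorProduct.map LinearMap.id d1z ((Δ1 f).1)
          + TensorProduct.map d1z LinearMap.id ((Δ1 f).2) = Δ0 (d1 f)) ∧
      -- chain map condition in degree 2: `∂₂ ∘ Δ₂ = Δ₁ ∘ d₂`
      (∀ r : P2 n,
        (TensorProduct.map LinearMap.id d2z ((Δ2 r).1)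
            + TensorProduct.map d1z LinearMap.id ((Δ2 r).2.1),
         TensorProduct.map d2z LinearMap.id ((Δ2 r).2.2)
            - TensorProduct.map LinearMap.id d1z ((Δ2 r).2.1)) = Δ1 (d2 r)) ∧
      -- the stated values on generators
      Δ0 (1 : P0 n) = (1 : P0 n) ⊗ₜ[ℤ] (1 : P0 n) ∧
      (∀ i : Fin n, Δ1 (Y i) = ((1 : P0 n) ⊗ₜ[ℤ] Y i, Y i ⊗ₜ[ℤ] j (a i))) ∧
      (∀ i : Fin n, Δ1 (Z i) = ((1 : P0 n) ⊗ₜ[ℤ] Z i, Z i ⊗ₜ[ℤ] j (b i))) ∧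
      (Δ2 (1 : P2 n)).1 = (1 : P0 n) ⊗ₜ[ℤ] (1 : P2 n) ∧
      (Δ2 (1 : P2 n)).2.1 = Delta11 n hn :=
  ⟨diag0 n, diag1 n, diag2 n hn, diag0_j_mul, diag1_j_smul, diag2_j_mul hn, augaug_diag0,
    diag_chain_one, diag_chain_two hn, orbitMap_one _ _, fun i => diag1_single (.inl i),
    fun i => diag1_single (.inr i), congrArg Prod.fst (diag2_one hn),
    congrArg (·.2.1) (diag2_one hn)⟩

end SurfaceOr
end

section
/- Let M and N be abelian groups regarded as trivial ℤG-modules, and let u: P_1 → M and v: P_1 → N be ℤG-module homomorphisms. Then ((u ⊗ v) ∘ Δ_{11})(w) = Σ_{i=1}^n (u(y_i) ⊗ v(z_i) − u(z_i) ⊗ v(y_i)) in M ⊗_ℤ N. Consequently, if u and v are cocycles representing classes in H^1(G,M) and H^1(G,N), their cup product in H^2(G, M⊗N) is represented by the homomorphism P_2 → M⊗N sending w to Σ_{i=1}^n (u(y_i)⊗v(z_i) − u(z_i)⊗v(y_i)). -/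
/-!
A `G`-invariant additive map on a `ℤG`-module only sees `r • f` through the augmentation
`ε(r)`. The Fox derivatives `∂p/∂aᵢ`, `∂p/∂bᵢ` have augmentation zero, so every term of
`Δ₁₁(w)` with a Fox column in a tensor factor dies under `u ⊗ v`; invariance strips the
group-element coefficients from the remaining terms, which leaves
`Σᵢ u(yᵢ) ⊗ v(zᵢ) - Σᵢ u(zᵢ) ⊗ v(yᵢ)`.
-/

open scoped TensorProduct
open scoped commutatorElement

namespace SurfaceOr

theorem map_smul_eq_lift_smul {G P M : Type*} [Monoid G] [AddCommGroup P]
    [Module (MonoidAlgebra ℤ G) P] [AddCommGroup M] (u : P →+ M)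
    (hu : ∀ (g : G) (f : P), u (MonoidAlgebra.of ℤ G g • f) = u f)
    (r : MonoidAlgebra ℤ G) (f : P) :
    u (r • f) = MonoidAlgebra.lift ℤ ℤ G 1 r • u f := by
  induction r using MonoidAlgebra.induction_on with
  | of g => rw [hu, MonoidAlgebra.lift_of, MonoidHom.one_apply, one_smul]
  | add r s hr hs => rw [add_smul, map_add, hr, hs, map_add, add_smul]
  | smul k r hr => rw [smul_assoc, map_zsmul, hr, map_zsmul, smul_assoc]

theorem sum_filter_succ_lt_add_last {M : Type*} [AddCommMonoid M] (n : ℕ) (hn : 1 ≤ n)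
    (f : Fin n → M) :
    ∑ i ∈ Finset.univ.filter (fun i : Fin n => (i : ℕ) + 1 < n), f i
      + f ⟨n - 1, by omega⟩ = ∑ i, f i := by
  rw [← Finset.sum_filter_add_sum_filter_not Finset.univ (fun i : Fin n => (i : ℕ) + 1 < n)]
  congr 1
  have hlast :
      Finset.univ.filter (fun i : Fin n => ¬ ((i : ℕ) + 1 < n)) = {⟨n - 1, by omega⟩} := by
    ext i
    simp only [Finset.mem_filter, Finset.mem_univ, true_and, Finset.mem_singleton, Fin.ext_iff]
    omega
  rw [hlast, Finset.sum_singleton]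

section

variable {n : ℕ}

theorem aug_j (g : SurfaceGroup n) : aug (j g) = 1 :=
  MonoidAlgebra.lift_of _ g

theorem aug_Fa (i : Fin n) : aug (Fa i) = 0 := by
  simp [Fa, aug_j]

theorem aug_Fb (i : Fin n) : aug (Fb i) = 0 := by
  simp [Fb, aug_j]

variable {M : Type*} [AddCommGroup M] (u : P1 n →ₗ[ℤ] M)
  (hu : ∀ (g : SurfaceGroup n) (f : P1 n), u (j g • f) = u f)
include hu

theorem map_smul_eq_aug_smul (r : A n) (f : P1 n) : u (r • f) = aug r • u f :=
  map_smul_eq_lift_smul u.toAddMonoidHom hu r f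

theorem map_Fa_smul (i : Fin n) (f : P1 n) : u (Fa i • f) = 0 := by
  rw [map_smul_eq_aug_smul u hu, aug_Fa, zero_smul]

theorem map_FoxCol (i : Fin n) : u (FoxCol i) = 0 := by
  rw [FoxCol, map_add, map_Fa_smul u hu, map_smul_eq_aug_smul u hu, aug_Fb, zero_smul, add_zero]

end

/-- for trivial `ℤG`-modules `M`, `N` and `ℤG`-homomorphisms
`u : P₁ → M`, `v : P₁ → N` (i.e. `ℤ`-linear `G`-invariant maps), the composite
`(u ⊗ v) ∘ Δ₁₁` sends `w` to `Σᵢ (u(yᵢ) ⊗ v(zᵢ) - u(zᵢ) ⊗ v(yᵢ))`; hence the cup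
product of the classes of the cocycles `u` and `v` is represented by the homomorphism
`P₂ → M ⊗ N` sending `w` to this element. -/
theorem statement2 (n : ℕ) (hn : 1 ≤ n) (M N : Type) [AddCommGroup M] [AddCommGroup N]
    (u : P1 n →ₗ[ℤ] M) (v : P1 n →ₗ[ℤ] N)
    (hu : ∀ (g : SurfaceGroup n) (f : P1 n), u (j g • f) = u f)
    (hv : ∀ (g : SurfaceGroup n) (f : P1 n), v (j g • f) = v f) :
    TensorProduct.map u v (Delta11 n hn) =
      ∑ i : Fin n, (u (Y i) ⊗ₜ[ℤ] v (Z i) - u (Z i) ⊗ₜ[ℤ] v (Y i)) := by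
  rw [Delta11]
  simp only [map_sub, map_add, map_sum, TensorProduct.map_tmul, map_FoxCol u hu,
    map_Fa_smul u hu, hu, hv, TensorProduct.zero_tmul, Finset.sum_const_zero, zero_add,
    sub_zero, Finset.sum_sub_distrib]
  rw [← sum_filter_succ_lt_add_last n hn fun i => u (Z i) ⊗ₜ[ℤ] v (Y i)]
  abel

end SurfaceOr
end
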